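/- For a bounded linear operator A on a complex Hilbert space, w(A)² ≤ (1/4)‖A*A + AA*‖ + (1/2)w(A²). -/

import Mathlib

open ContinuousLinearMap in
noncomputable def numRad {E : Type*} [NormedAddCommGroup E] [InnerProductSpace ℂ E]
    (T : E →L[ℂ] E) : ℝ :=
  ⨆ x : {x : E // ‖x‖ = 1}, ‖(inner ℂ (T x) (x : E) : ℂ)‖

variable {H : Type*} [NormedAddCommGroup H] [InnerProductSpace ℂ H] [CompleteSpace H]

/-- `|A| = (A*A)^{1/2}`, the positive square root of `A*A`. -/
noncomputable def absOp (A : H →L[ℂ] H) : H →L[ℂ] H :=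
  CFC.sqrt (ContinuousLinearMap.adjoint A * A)

/-- real part of an operator -/
noncomputable def reOp (A : H →L[ℂ] H) : H →L[ℂ] H :=
  (1 / 2 : ℂ) • (A + ContinuousLinearMap.adjoint A)

/-- imaginary part of an operator -/
noncomputable def imOp (A : H →L[ℂ] H) : H →L[ℂ] H :=
  (1 / (2 * Complex.I) : ℂ) • (A - ContinuousLinearMap.adjoint A)

/-- the block diagonal operator `diag(A,B)` on `H ⊕ H` (ℓ²-sum). -/
noncomputable def blockDiag (A B : H →L[ℂ] H) :
    WithLp 2 (H × H) →L[ℂ] WithLp 2 (H × H) :=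
  ((WithLp.prodContinuousLinearEquiv 2 ℂ H H).symm.toContinuousLinearMap).comp
    ((A.prodMap B).comp (WithLp.prodContinuousLinearEquiv 2 ℂ H H).toContinuousLinearMap)

/-- the off-diagonal block operator `[[O,A],[B,O]] : (x,y) ↦ (A y, B x)` on `H ⊕ H`. -/
noncomputable def blockOffDiag (A B : H →L[ℂ] H) :
    WithLp 2 (H × H) →L[ℂ] WithLp 2 (H × H) :=
  ((WithLp.prodContinuousLinearEquiv 2 ℂ H H).symm.toContinuousLinearMap).comp
    (((A.prodMap B).comp (ContinuousLinearEquiv.prodComm ℂ H H).toContinuousLinearMap).comp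
      (WithLp.prodContinuousLinearEquiv 2 ℂ H H).toContinuousLinearMap)

/-!
Fix a unit vector `x` and rotate `A` by a unimodular scalar so that `⟪A x, x⟫` becomes the
nonnegative real `|⟪A x, x⟫|`. Then `v = A x + A* x` satisfies `re ⟪v, x⟫ = 2 |⟪A x, x⟫|`, so by
Cauchy–Schwarz
`4 |⟪A x, x⟫|² ≤ ‖v‖² = ‖A x‖² + ‖A* x‖² + 2 re ⟪A² x, x⟫ ≤ ‖A*A + AA*‖ + 2 |⟪A² x, x⟫|`,
and the rotation changes neither side. Taking the supremum over `x` gives the inequality.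
-/

open ContinuousLinearMap RCLike
open scoped InnerProductSpace

section
variable {𝕜 E : Type*} [RCLike 𝕜] [NormedAddCommGroup E] [InnerProductSpace 𝕜 E] [CompleteSpace E]

theorem norm_apply_sq_add_norm_adjoint_apply_sq_le (T : E →L[𝕜] E) (x : E) :
    ‖T x‖ ^ 2 + ‖adjoint T x‖ ^ 2 ≤ ‖adjoint T * T + T * adjoint T‖ * ‖x‖ ^ 2 := by
  have h : ‖T x‖ ^ 2 + ‖adjoint T x‖ ^ 2 = re ⟪(adjoint T * T + T * adjoint T) x, x⟫_𝕜 := by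
    rw [apply_norm_sq_eq_inner_adjoint_left, apply_norm_sq_eq_inner_adjoint_left,
      adjoint_adjoint, add_apply, inner_add_left, map_add]
    rfl
  calc ‖T x‖ ^ 2 + ‖adjoint T x‖ ^ 2
      ≤ ‖(adjoint T * T + T * adjoint T) x‖ * ‖x‖ := h ▸ re_inner_le_norm _ _
    _ ≤ ‖adjoint T * T + T * adjoint T‖ * ‖x‖ * ‖x‖ := by gcongr; exact le_opNorm _ _
    _ = _ := by ring

theorem four_mul_re_inner_apply_self_sq_le (T : E →L[𝕜] E) (x : E) :
    4 * re ⟪T x, x⟫_𝕜 ^ 2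
      ≤ (‖T x‖ ^ 2 + ‖adjoint T x‖ ^ 2 + 2 * ‖⟪T (T x), x⟫_𝕜‖) * ‖x‖ ^ 2 := by
  set v := T x + adjoint T x
  have hv : re ⟪v, x⟫_𝕜 = 2 * re ⟪T x, x⟫_𝕜 := by
    rw [inner_add_left, map_add, adjoint_inner_left, ← inner_conj_symm, conj_re]
    ring
  have hnorm : ‖v‖ ^ 2 ≤ ‖T x‖ ^ 2 + ‖adjoint T x‖ ^ 2 + 2 * ‖⟪T (T x), x⟫_𝕜‖ := by
    have : re ⟪T x, adjoint T x⟫_𝕜 ≤ ‖⟪T (T x), x⟫_𝕜‖ := by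
      rw [adjoint_inner_right]; exact re_le_norm _
    rw [norm_add_sq (𝕜 := 𝕜)]; linarith
  have hcs : |re ⟪v, x⟫_𝕜| ≤ ‖v‖ * ‖x‖ := (abs_re_le_norm _).trans (norm_inner_le_norm _ _)
  calc 4 * re ⟪T x, x⟫_𝕜 ^ 2 = re ⟪v, x⟫_𝕜 ^ 2 := by rw [hv]; ring
    _ ≤ (‖v‖ * ‖x‖) ^ 2 := sq_le_sq' (abs_le.1 hcs).1 (abs_le.1 hcs).2
    _ = ‖v‖ ^ 2 * ‖x‖ ^ 2 := mul_pow _ _ _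
    _ ≤ _ := by gcongr
end

section
variable {E : Type*} [NormedAddCommGroup E] [InnerProductSpace ℂ E]

theorem numRad_nonneg (T : E →L[ℂ] E) : 0 ≤ numRad T :=
  Real.iSup_nonneg fun _ ↦ norm_nonneg _

theorem norm_inner_apply_self_le (T : E →L[ℂ] E) {x : E} (hx : ‖x‖ = 1) : ‖⟪T x, x⟫_ℂ‖ ≤ ‖T‖ :=
  calc ‖⟪T x, x⟫_ℂ‖ ≤ ‖T x‖ * ‖x‖ := norm_inner_le_norm _ _
    _ ≤ ‖T‖ := by simpa [hx] using T.le_opNorm x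

theorem norm_inner_le_numRad (T : E →L[ℂ] E) {x : E} (hx : ‖x‖ = 1) :
    ‖⟪T x, x⟫_ℂ‖ ≤ numRad T :=
  le_ciSup (f := fun y : {y : E // ‖y‖ = 1} ↦ ‖⟪T y, (y : E)⟫_ℂ‖)
    ⟨‖T‖, Set.forall_mem_range.2 fun y ↦ norm_inner_apply_self_le T y.2⟩ ⟨x, hx⟩
end

theorem norm_inner_apply_self_sq_le (A : H →L[ℂ] H) {x : H} (hx : ‖x‖ = 1) :
    ‖⟪A x, x⟫_ℂ‖ ^ 2
      ≤ 1 / 4 * ‖adjoint A * A + A * adjoint A‖ + 1 / 2 * ‖⟪(A * A) x, x⟫_ℂ‖ := by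
  obtain ⟨c, hc, hcz⟩ := Complex.exists_norm_eq_mul_self ⟪A x, x⟫_ℂ
  set T := starRingEnd ℂ c • A
  have hre : re ⟪T x, x⟫_ℂ = ‖⟪A x, x⟫_ℂ‖ := by
    rw [smul_apply, inner_smul_left, Complex.conj_conj, ← hcz]
    exact Complex.ofReal_re _
  have hT : ‖T x‖ = ‖A x‖ := by
    rw [smul_apply, norm_smul, Complex.norm_conj, hc, one_mul]
  have hTadj : ‖adjoint T x‖ = ‖adjoint A x‖ := by
    rw [← star_eq_adjoint, star_smul, star_eq_adjoint, smul_apply, norm_smul, Complex.star_def,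
      Complex.conj_conj, hc, one_mul]
  have hT2 : ‖⟪T (T x), x⟫_ℂ‖ = ‖⟪(A * A) x, x⟫_ℂ‖ := by
    simp [T, hc]
  have h1 := four_mul_re_inner_apply_self_sq_le T x
  have h2 := norm_apply_sq_add_norm_adjoint_apply_sq_le A x
  rw [hre, hT, hTadj, hT2, hx] at h1
  rw [hx] at h2
  linarith

theorem abuOmar_kittaneh_ineq (A : H →L[ℂ] H) :
    numRad A ^ 2
      ≤ (1 / 4) * ‖ContinuousLinearMap.adjoint A * A + A * ContinuousLinearMap.adjoint A‖
        + (1 / 2) * numRad (A * A) := by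
  have hR : 0 ≤ (1 / 4) * ‖adjoint A * A + A * adjoint A‖ + (1 / 2) * numRad (A * A) := by
    have := numRad_nonneg (A * A)
    positivity
  rw [numRad, Real.iSup_pow_of_ne_zero (fun _ ↦ norm_nonneg _) two_ne_zero]
  refine Real.iSup_le (fun x ↦ (norm_inner_apply_self_sq_le A x.2).trans ?_) hR
  gcongr
  exact norm_inner_le_numRad _ x.2
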